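/- arXiv:1703.01332 — 2 statements merged into one kernel-verified Lean document; each statement's English description precedes it below -/
import Mathlib

section
/- Assume h : ℝ^p → [0,+∞] is convex, proper, and the minimization problem defining β̂ has at least one solution for every y ∈ ℝ^n and X ∈ ℝ^{n×p}. Define G(t) = sup_{β∈ℝ^p : ‖X(β−β*)‖ ≤ t} (εᵀX(β−β*) − h(β)) − t·‖X(β̂−β*)‖ for t ≥ 0. Then G is concave and the prediction error ‖X(β̂−β*)‖ is a maximizer of G. -/
open scoped ENNReal

/-- Euclidean norm of a vector in `ℝ^k`. -/
noncomputable def l2norm {k : ℕ} (v : Fin k → ℝ) : ℝ := Real.sqrt (∑ i, (v i) ^ 2)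

/-- Euclidean inner product on `ℝ^k`. -/
noncomputable def dotp {k : ℕ} (u v : Fin k → ℝ) : ℝ := ∑ i, u i * v i

/-- `G(t) = sup_{β : ‖X(β-β*)‖ ≤ t} (εᵀX(β-β*) - h(β)) - t · r̂`, with values in `EReal`
(the sup over the empty set is `⊥ = -∞`); here `rhat` stands for `‖X(β̂-β*)‖`. -/
noncomputable def Gval {n p : ℕ} (X : Matrix (Fin n) (Fin p) ℝ) (bs : Fin p → ℝ)
    (h : (Fin p → ℝ) → ℝ≥0∞) (e : Fin n → ℝ) (rhat : ℝ) (t : ℝ) : EReal :=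
  sSup {x : EReal | ∃ b : Fin p → ℝ, l2norm (X.mulVec (b - bs)) ≤ t ∧
      x = (dotp e (X.mulVec (b - bs)) : EReal) - (h b : EReal)} - ((t * rhat : ℝ) : EReal)

/-!
Write `v(β) = X(β - β*)`, `r = ‖v(β̂)‖` and `F(t) = sup_{‖v(β)‖ ≤ t} (εᵀv(β) - h(β))`, so that
`G(t) = F(t) - t r`.

Concavity: `β ↦ εᵀv(β) - h(β)` is concave and `β ↦ ‖v(β)‖` is convex, so the convex combination
of near-maximisers for `F(s)` and `F(t)` is admissible for `F(a s + (1 - a) t)` and nearly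
attains `a F(s) + (1 - a) F(t)`; subtracting the linear term `t r` keeps concavity.

Maximality: comparing `β̂` with `β̂ + θ(β - β̂)` and letting `θ → 0` gives the first-order
condition `⟨v(β̂) - ε, v(β) - v(β̂)⟩ + h(β) - h(β̂) ≥ 0`. With Cauchy–Schwarz,
`⟨v(β̂), v(β)⟩ ≤ r t` whenever `‖v(β)‖ ≤ t`, hence `G(t) ≤ εᵀv(β̂) - h(β̂) - r² ≤ G(r)`.
-/

open scoped RealInnerProductSpace

open Filter Topology in
lemma nonneg_of_forall_add_mul_nonneg {c d : ℝ}
    (h : ∀ θ : ℝ, 0 < θ → θ ≤ 1 → 0 ≤ c + θ * d) : 0 ≤ c := by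
  have hlim : Tendsto (fun θ : ℝ => c + θ * d) (𝓝[>] 0) (𝓝 c) := by
    have : Continuous (fun θ : ℝ => c + θ * d) := by fun_prop
    simpa using (this.tendsto 0).mono_left nhdsWithin_le_nhds
  exact ge_of_tendsto hlim <| by
    filter_upwards [Ioc_mem_nhdsGT one_pos] with θ hθ using h θ hθ.1 hθ.2

lemma ENNReal.ne_top_and_toReal_add_le {A B : ℝ} (hA : 0 ≤ A) (hB : 0 ≤ B) {x y : ℝ≥0∞}
    (hy : y ≠ ⊤) (hle : ENNReal.ofReal A + 2 * x ≤ ENNReal.ofReal B + 2 * y) :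
    x ≠ ⊤ ∧ A + 2 * x.toReal ≤ B + 2 * y.toReal := by
  have hR : ENNReal.ofReal B + 2 * y ≠ ⊤ := by finiteness
  have hx : x ≠ ⊤ := by
    simpa [ENNReal.mul_eq_top] using (ENNReal.add_ne_top.1 (ne_top_of_le_ne_top hR hle)).2
  refine ⟨hx, ?_⟩
  simpa [ENNReal.toReal_add, hA, hB, hx, hy, ENNReal.mul_eq_top] using ENNReal.toReal_mono hR hle

namespace EReal

lemma sSup_sub_coe_le_iff {A : Set EReal} {c : ℝ} {u : EReal} :
    sSup A - c ≤ u ↔ ∀ z ∈ A, z - c ≤ u := by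
  simp only [EReal.sub_le_iff_le_add (Or.inl (coe_ne_bot c)) (Or.inl (coe_ne_top c)), sSup_le_iff]

lemma coe_mul_sSup_sub_coe_le_iff {A : Set EReal} {k c : ℝ} (hk : 0 < k) {u : EReal} :
    (k : EReal) * (sSup A - c) ≤ u ↔ ∀ z ∈ A, (k : EReal) * (z - c) ≤ u := by
  have hmul (x : EReal) : (k : EReal) * x ≤ u ↔ x ≤ u / k := by
    rw [EReal.le_div_iff_mul_le (by exact_mod_cast hk) (coe_ne_top k), mul_comm]
  simp only [hmul, sSup_sub_coe_le_iff]

lemma exists_lt_coe_mul_sub_coe {A : Set EReal} {k c : ℝ} (hk : 0 < k) {u : EReal}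
    (hu : u < (k : EReal) * (sSup A - c)) : ∃ z ∈ A, u < (k : EReal) * (z - c) := by
  contrapose! hu
  exact (coe_mul_sSup_sub_coe_le_iff hk).2 hu

end EReal

lemma convexOn_toReal_setOf_ne_top {V : Type*} [AddCommGroup V] [Module ℝ V] {h : V → ℝ≥0∞}
    (hconv : ∀ b₁ b₂ : V, ∀ a : ℝ, 0 ≤ a → a ≤ 1 →
      h (a • b₁ + (1 - a) • b₂) ≤ ENNReal.ofReal a * h b₁ + ENNReal.ofReal (1 - a) * h b₂) :
    ConvexOn ℝ {b | h b ≠ ⊤} (fun b => (h b).toReal) := by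
  have key {b₁ b₂ : V} (h₁ : h b₁ ≠ ⊤) (h₂ : h b₂ ≠ ⊤) {a c : ℝ} (ha : 0 ≤ a) (hc : 0 ≤ c)
      (hac : a + c = 1) :
      h (a • b₁ + c • b₂) ≤ ENNReal.ofReal (a * (h b₁).toReal + c * (h b₂).toReal) := by
    obtain rfl : c = 1 - a := by linarith
    rw [ENNReal.ofReal_add (by positivity) (by positivity), ENNReal.ofReal_mul ha,
      ENNReal.ofReal_mul hc, ENNReal.ofReal_toReal h₁, ENNReal.ofReal_toReal h₂]
    exact hconv b₁ b₂ a ha (by linarith)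
  refine ⟨fun b₁ h₁ b₂ h₂ a c ha hc hac => ?_, fun b₁ h₁ b₂ h₂ a c ha hc hac => ?_⟩
  · exact ne_top_of_le_ne_top ENNReal.ofReal_ne_top (key h₁ h₂ ha hc hac)
  · simpa [ENNReal.toReal_ofReal (by positivity : 0 ≤ a * (h b₁).toReal + c * (h b₂).toReal)]
      using ENNReal.toReal_mono ENNReal.ofReal_ne_top (key h₁ h₂ ha hc hac)

namespace PenalizedLeastSquares

variable {V E : Type*} [AddCommGroup V] [Module ℝ V] [NormedAddCommGroup E] [InnerProductSpace ℝ E]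

section Optimality

variable {g : V → ℝ} {s : Set V} (L : V →ₗ[ℝ] E) (bs : V) (ε : E) {bhat b : V}

theorem inner_residual_add_nonneg_of_minimizer (hg : ConvexOn ℝ s g) (hbhat : bhat ∈ s) (hb : b ∈ s)
    (hmin : ∀ b ∈ s, ‖L (bhat - bs) - ε‖ ^ 2 + 2 * g bhat ≤ ‖L (b - bs) - ε‖ ^ 2 + 2 * g b) :
    0 ≤ ⟪L (bhat - bs) - ε, L (b - bhat)⟫ + (g b - g bhat) := by
  set u := L (bhat - bs) - ε
  set w := L (b - bhat)
  refine nonneg_of_forall_add_mul_nonneg (d := ‖w‖ ^ 2 / 2) fun θ hθ hθ1 => ?_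
  have hmem : θ • b + (1 - θ) • bhat ∈ s := hg.1 hb hbhat hθ.le (by linarith) (by ring)
  have hpen : g (θ • b + (1 - θ) • bhat) ≤ θ * g b + (1 - θ) * g bhat :=
    hg.2 hb hbhat hθ.le (by linarith) (by ring)
  have hres : L (θ • b + (1 - θ) • bhat - bs) - ε = u + θ • w := by
    simp only [u, w, map_sub, map_add, map_smul]; module
  have hcmp := hmin _ hmem
  rw [hres, norm_add_sq_real, inner_smul_right, norm_smul, Real.norm_of_nonneg hθ.le] at hcmp
  refine le_of_mul_le_mul_left ?_ hθ
  linarith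

theorem inner_sub_le_of_minimizer (hg : ConvexOn ℝ s g) (hbhat : bhat ∈ s) (hb : b ∈ s)
    (hmin : ∀ b ∈ s, ‖L (bhat - bs) - ε‖ ^ 2 + 2 * g bhat ≤ ‖L (b - bs) - ε‖ ^ 2 + 2 * g b)
    {t : ℝ} (hbt : ‖L (b - bs)‖ ≤ t) :
    ⟪ε, L (b - bs)⟫ - g b - t * ‖L (bhat - bs)‖ ≤
      ⟪ε, L (bhat - bs)⟫ - g bhat - ‖L (bhat - bs)‖ * ‖L (bhat - bs)‖ := by
  have hvi := inner_residual_add_nonneg_of_minimizer L bs ε hg hbhat hb hmin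
  have hcs : ⟪L (bhat - bs), L (b - bs)⟫ ≤ ‖L (bhat - bs)‖ * t :=
    (real_inner_le_norm _ _).trans (mul_le_mul_of_nonneg_left hbt (norm_nonneg _))
  have hdiff : L (b - bhat) = L (b - bs) - L (bhat - bs) := by
    rw [← map_sub, sub_sub_sub_cancel_right]
  rw [hdiff, inner_sub_right, inner_sub_left, inner_sub_left,
    real_inner_self_eq_norm_mul_norm] at hvi
  linarith

end Optimality

variable (L : V →ₗ[ℝ] E) (bs : V) (h : V → ℝ≥0∞) (ε : E)

noncomputable def penalizedCorrelation (b : V) : EReal :=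
  ((⟪ε, L (b - bs)⟫ : ℝ) : EReal) - h b

noncomputable def G (r t : ℝ) : EReal :=
  sSup (penalizedCorrelation L bs h ε '' {b | ‖L (b - bs)‖ ≤ t}) - ((t * r : ℝ) : EReal)

variable {L bs h ε}

lemma penalizedCorrelation_of_eq_top {b : V} (hb : h b = ⊤) :
    penalizedCorrelation L bs h ε b = ⊥ := by
  simp [penalizedCorrelation, hb]

lemma penalizedCorrelation_of_ne_top {b : V} (hb : h b ≠ ⊤) :
    penalizedCorrelation L bs h ε b = ((⟪ε, L (b - bs)⟫ - (h b).toReal : ℝ) : EReal) := by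
  rw [penalizedCorrelation, EReal.coe_sub, ← EReal.coe_ennreal_toReal hb]

lemma norm_map_combo_sub_le (a : ℝ) (ha0 : 0 ≤ a) (ha1 : a ≤ 1) (b₁ b₂ : V) :
    ‖L (a • b₁ + (1 - a) • b₂ - bs)‖ ≤ a * ‖L (b₁ - bs)‖ + (1 - a) * ‖L (b₂ - bs)‖ := by
  rw [show a • b₁ + (1 - a) • b₂ - bs = a • (b₁ - bs) + (1 - a) • (b₂ - bs) by module,
    map_add, map_smul, map_smul]
  refine (norm_add_le _ _).trans_eq ?_
  rw [norm_smul, norm_smul, Real.norm_of_nonneg ha0, Real.norm_of_nonneg (by linarith)]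

lemma penalizedCorrelation_concave
    (hconv : ConvexOn ℝ {b | h b ≠ ⊤} (fun b => (h b).toReal))
    {a : ℝ} (ha0 : 0 < a) (ha1 : a < 1) (b₁ b₂ : V) (c₁ c₂ : ℝ) :
    (a : EReal) * (penalizedCorrelation L bs h ε b₁ - c₁) +
        ((1 - a : ℝ) : EReal) * (penalizedCorrelation L bs h ε b₂ - c₂) ≤
      penalizedCorrelation L bs h ε (a • b₁ + (1 - a) • b₂) - ((a * c₁ + (1 - a) * c₂ : ℝ)) := by
  have ha0' : (0 : EReal) < a := by exact_mod_cast ha0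
  have ha1' : (0 : EReal) < ((1 - a : ℝ) : EReal) := by exact_mod_cast sub_pos.2 ha1
  by_cases h₁ : h b₁ = ⊤
  · rw [penalizedCorrelation_of_eq_top h₁, EReal.bot_sub, EReal.mul_bot_of_pos ha0',
      EReal.bot_add]
    exact bot_le
  by_cases h₂ : h b₂ = ⊤
  · rw [penalizedCorrelation_of_eq_top h₂, EReal.bot_sub, EReal.mul_bot_of_pos ha1',
      EReal.add_bot]
    exact bot_le
  have hmem : h (a • b₁ + (1 - a) • b₂) ≠ ⊤ := hconv.1 h₁ h₂ ha0.le (by linarith) (by ring)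
  have hpen : (h (a • b₁ + (1 - a) • b₂)).toReal ≤ a * (h b₁).toReal + (1 - a) * (h b₂).toReal :=
    hconv.2 h₁ h₂ ha0.le (by linarith) (by ring)
  have hlin : ⟪ε, L (a • b₁ + (1 - a) • b₂ - bs)⟫ =
      a * ⟪ε, L (b₁ - bs)⟫ + (1 - a) * ⟪ε, L (b₂ - bs)⟫ := by
    rw [show a • b₁ + (1 - a) • b₂ - bs = a • (b₁ - bs) + (1 - a) • (b₂ - bs) by module,
      map_add, map_smul, map_smul, inner_add_right, inner_smul_right, inner_smul_right]
  rw [penalizedCorrelation_of_ne_top h₁, penalizedCorrelation_of_ne_top h₂,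
    penalizedCorrelation_of_ne_top hmem]
  norm_cast
  linarith

theorem G_concave
    (hconv : ConvexOn ℝ {b | h b ≠ ⊤} (fun b => (h b).toReal))
    (r s t a : ℝ) (ha0 : 0 ≤ a) (ha1 : a ≤ 1) :
    (a : EReal) * G L bs h ε r s + ((1 - a : ℝ) : EReal) * G L bs h ε r t ≤
      G L bs h ε r (a * s + (1 - a) * t) := by
  rcases ha0.eq_or_lt with rfl | ha0
  · simp
  rcases ha1.eq_or_lt with rfl | ha1
  · simp
  refine EReal.add_le_of_forall_lt fun u hu w hw => ?_
  obtain ⟨_, ⟨b₁, hb₁, rfl⟩, hu⟩ := EReal.exists_lt_coe_mul_sub_coe ha0 hu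
  obtain ⟨_, ⟨b₂, hb₂, rfl⟩, hw⟩ := EReal.exists_lt_coe_mul_sub_coe (sub_pos.2 ha1) hw
  have hnorm : ‖L (a • b₁ + (1 - a) • b₂ - bs)‖ ≤ a * s + (1 - a) * t :=
    (norm_map_combo_sub_le a ha0.le ha1.le b₁ b₂).trans
      (add_le_add (mul_le_mul_of_nonneg_left hb₁ ha0.le)
        (mul_le_mul_of_nonneg_left hb₂ (sub_nonneg.2 ha1.le)))
  calc u + w ≤ _ := add_le_add hu.le hw.le
    _ ≤ _ := penalizedCorrelation_concave hconv ha0 ha1 b₁ b₂ (s * r) (t * r)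
    _ ≤ G L bs h ε r (a * s + (1 - a) * t) := by
      rw [G, show a * (s * r) + (1 - a) * (t * r) = (a * s + (1 - a) * t) * r by ring]
      exact EReal.sub_le_sub (le_sSup ⟨_, hnorm, rfl⟩) le_rfl

lemma penalizedCorrelation_sub_le_of_minimizer {bhat : V}
    (hconv : ConvexOn ℝ {b | h b ≠ ⊤} (fun b => (h b).toReal))
    (hmin : ∀ b : V, ENNReal.ofReal (‖L (bhat - bs) - ε‖ ^ 2) + 2 * h bhat ≤
      ENNReal.ofReal (‖L (b - bs) - ε‖ ^ 2) + 2 * h b)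
    {b : V} {t : ℝ} (hbt : ‖L (b - bs)‖ ≤ t) :
    penalizedCorrelation L bs h ε b - ((t * ‖L (bhat - bs)‖ : ℝ) : EReal) ≤
      penalizedCorrelation L bs h ε bhat - ((‖L (bhat - bs)‖ * ‖L (bhat - bs)‖ : ℝ) : EReal) := by
  by_cases hb : h b = ⊤
  · rw [penalizedCorrelation_of_eq_top hb, EReal.bot_sub]
    exact bot_le
  have hreal (b' : V) (hb' : h b' ≠ ⊤) := ENNReal.ne_top_and_toReal_add_le (sq_nonneg _)
    (sq_nonneg _) hb' (hmin b')
  have hhat : h bhat ≠ ⊤ := (hreal b hb).1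
  have key := inner_sub_le_of_minimizer L bs ε hconv hhat hb
    (fun b' hb' => (hreal b' hb').2) hbt
  rw [penalizedCorrelation_of_ne_top hb, penalizedCorrelation_of_ne_top hhat]
  exact_mod_cast key

theorem G_le_G_norm_of_minimizer {bhat : V}
    (hconv : ConvexOn ℝ {b | h b ≠ ⊤} (fun b => (h b).toReal))
    (hmin : ∀ b : V, ENNReal.ofReal (‖L (bhat - bs) - ε‖ ^ 2) + 2 * h bhat ≤
      ENNReal.ofReal (‖L (b - bs) - ε‖ ^ 2) + 2 * h b)
    (t : ℝ) :
    G L bs h ε ‖L (bhat - bs)‖ t ≤ G L bs h ε ‖L (bhat - bs)‖ ‖L (bhat - bs)‖ :=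
  calc G L bs h ε ‖L (bhat - bs)‖ t
      ≤ penalizedCorrelation L bs h ε bhat -
          ((‖L (bhat - bs)‖ * ‖L (bhat - bs)‖ : ℝ) : EReal) :=
        EReal.sSup_sub_coe_le_iff.2 <| by
          rintro _ ⟨b, hb, rfl⟩
          exact penalizedCorrelation_sub_le_of_minimizer hconv hmin hb
    _ ≤ G L bs h ε ‖L (bhat - bs)‖ ‖L (bhat - bs)‖ :=
        EReal.sub_le_sub (le_sSup ⟨bhat, show ‖L (bhat - bs)‖ ≤ _ from le_rfl, rfl⟩) le_rfl

end PenalizedLeastSquares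

lemma l2norm_eq_norm {k : ℕ} (v : Fin k → ℝ) : l2norm v = ‖WithLp.toLp 2 v‖ := by
  simp [EuclideanSpace.norm_eq, l2norm, sq_abs]

lemma dotp_eq_inner {k : ℕ} (u v : Fin k → ℝ) : dotp u v = ⟪WithLp.toLp 2 u, WithLp.toLp 2 v⟫ := by
  simp [dotp, PiLp.inner_apply, mul_comm]

noncomputable def Matrix.mulVecToLp {n p : ℕ} (X : Matrix (Fin n) (Fin p) ℝ) :
    (Fin p → ℝ) →ₗ[ℝ] EuclideanSpace ℝ (Fin n) :=
  (WithLp.linearEquiv 2 ℝ (Fin n → ℝ)).symm.toLinearMap ∘ₗ X.mulVecLin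

@[simp]
lemma Matrix.mulVecToLp_apply {n p : ℕ} (X : Matrix (Fin n) (Fin p) ℝ) (b : Fin p → ℝ) :
    X.mulVecToLp b = WithLp.toLp 2 (X.mulVec b) :=
  rfl

lemma Gval_eq_G {n p : ℕ} (X : Matrix (Fin n) (Fin p) ℝ) (bs : Fin p → ℝ)
    (h : (Fin p → ℝ) → ℝ≥0∞) (e : Fin n → ℝ) (rhat t : ℝ) :
    Gval X bs h e rhat t = PenalizedLeastSquares.G X.mulVecToLp bs h (WithLp.toLp 2 e) rhat t := by
  simp only [Gval, PenalizedLeastSquares.G, l2norm_eq_norm, dotp_eq_inner]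
  congr
  ext
  simp [PenalizedLeastSquares.penalizedCorrelation, eq_comm]

theorem G_concave_and_maximized_at_prediction_error_general {n p : ℕ}
    (X : Matrix (Fin n) (Fin p) ℝ) (bs : Fin p → ℝ) (ε : Fin n → ℝ)
    (y : Fin n → ℝ) (hy : y = X.mulVec bs + ε)
    (h : (Fin p → ℝ) → ℝ≥0∞)
    (hconv : ∀ b₁ b₂ : Fin p → ℝ, ∀ a : ℝ, 0 ≤ a → a ≤ 1 →
      h (a • b₁ + (1 - a) • b₂) ≤ ENNReal.ofReal a * h b₁ + ENNReal.ofReal (1 - a) * h b₂)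
    (bhat : Fin p → ℝ)
    (hmin : ∀ b : Fin p → ℝ,
      ENNReal.ofReal (l2norm (X.mulVec bhat - y) ^ 2) + 2 * h bhat ≤
        ENNReal.ofReal (l2norm (X.mulVec b - y) ^ 2) + 2 * h b) :
    (∀ s t : ℝ, 0 ≤ s → 0 ≤ t → ∀ a : ℝ, 0 ≤ a → a ≤ 1 →
      (a : EReal) * Gval X bs h ε (l2norm (X.mulVec (bhat - bs))) s +
        ((1 - a : ℝ) : EReal) * Gval X bs h ε (l2norm (X.mulVec (bhat - bs))) t ≤
      Gval X bs h ε (l2norm (X.mulVec (bhat - bs))) (a * s + (1 - a) * t)) ∧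
    (∀ t : ℝ, 0 ≤ t →
      Gval X bs h ε (l2norm (X.mulVec (bhat - bs))) t ≤
        Gval X bs h ε (l2norm (X.mulVec (bhat - bs))) (l2norm (X.mulVec (bhat - bs)))) := by
  have hres (b : Fin p → ℝ) :
      l2norm (X.mulVec b - y) = ‖X.mulVecToLp (b - bs) - WithLp.toLp 2 ε‖ := by
    rw [l2norm_eq_norm, hy, Matrix.mulVecToLp_apply, Matrix.mulVec_sub, sub_add_eq_sub_sub,
      WithLp.toLp_sub]
  have hmin' (b : Fin p → ℝ) := hres bhat ▸ hres b ▸ hmin b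
  simp only [Gval_eq_G, l2norm_eq_norm, ← Matrix.mulVecToLp_apply]
  have hconv' := convexOn_toReal_setOf_ne_top hconv
  exact ⟨fun s t _ _ a ha0 ha1 => PenalizedLeastSquares.G_concave hconv' _ s t a ha0 ha1,
    fun t _ => PenalizedLeastSquares.G_le_G_norm_of_minimizer hconv' hmin' t⟩

/-- for a convex, proper penalty such that the penalized least-squares problem
always has a solution, the function `G` is concave on `[0,∞)` and the prediction error
`‖X(β̂-β*)‖` is a maximizer of `G`. -/
theorem G_concave_and_maximized_at_prediction_error {n p : ℕ}
    (X : Matrix (Fin n) (Fin p) ℝ) (bs : Fin p → ℝ) (ε : Fin n → ℝ)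
    (y : Fin n → ℝ) (hy : y = X.mulVec bs + ε)
    (h : (Fin p → ℝ) → ℝ≥0∞)
    (hconv : ∀ b₁ b₂ : Fin p → ℝ, ∀ a : ℝ, 0 ≤ a → a ≤ 1 →
      h (a • b₁ + (1 - a) • b₂) ≤ ENNReal.ofReal a * h b₁ + ENNReal.ofReal (1 - a) * h b₂)
    (hproper : ∃ b : Fin p → ℝ, h b ≠ ⊤)
    (hexists : ∀ (y' : Fin n → ℝ) (X' : Matrix (Fin n) (Fin p) ℝ),
      ∃ bhat' : Fin p → ℝ, ∀ b : Fin p → ℝ,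
        ENNReal.ofReal (l2norm (X'.mulVec bhat' - y') ^ 2) + 2 * h bhat' ≤
          ENNReal.ofReal (l2norm (X'.mulVec b - y') ^ 2) + 2 * h b)
    (bhat : Fin p → ℝ)
    (hmin : ∀ b : Fin p → ℝ,
      ENNReal.ofReal (l2norm (X.mulVec bhat - y) ^ 2) + 2 * h bhat ≤
        ENNReal.ofReal (l2norm (X.mulVec b - y) ^ 2) + 2 * h b) :
    (∀ s t : ℝ, 0 ≤ s → 0 ≤ t → ∀ a : ℝ, 0 ≤ a → a ≤ 1 →
      (a : EReal) * Gval X bs h ε (l2norm (X.mulVec (bhat - bs))) s +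
        ((1 - a : ℝ) : EReal) * Gval X bs h ε (l2norm (X.mulVec (bhat - bs))) t ≤
      Gval X bs h ε (l2norm (X.mulVec (bhat - bs))) (a * s + (1 - a) * t)) ∧
    (∀ t : ℝ, 0 ≤ t →
      Gval X bs h ε (l2norm (X.mulVec (bhat - bs))) t ≤
        Gval X bs h ε (l2norm (X.mulVec (bhat - bs))) (l2norm (X.mulVec (bhat - bs)))) :=
  G_concave_and_maximized_at_prediction_error_general X bs ε y hy h hconv bhat hmin
end

section
/- Assume h : ℝ^p → [0,+∞] is convex and h(β*) < +∞. Define H : (0,+∞) → ℝ by H(t) = (1/t)·sup_{β∈ℝ^p : ‖X(β−β*)‖ ≤ t} (εᵀX(β−β*) + h(β*) − h(β)). Then H is continuous and non-increasing on (0,+∞). -/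
open scoped ENNReal

lemma l2norm_nonneg {k : ℕ} (v : Fin k → ℝ) : 0 ≤ l2norm v := Real.sqrt_nonneg _

lemma l2norm_zero {k : ℕ} : l2norm (0 : Fin k → ℝ) = 0 := by simp [l2norm]

lemma l2norm_smul {k : ℕ} (a : ℝ) (v : Fin k → ℝ) : l2norm (a • v) = |a| * l2norm v := by
  unfold l2norm
  rw [← Real.sqrt_sq_eq_abs, ← Real.sqrt_mul (sq_nonneg a)]
  congr 1
  rw [Finset.mul_sum]
  refine Finset.sum_congr rfl fun i _ => ?_
  simp [mul_pow]

lemma dotp_smul {k : ℕ} (e : Fin k → ℝ) (a : ℝ) (v : Fin k → ℝ) :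
    dotp e (a • v) = a * dotp e v := by
  unfold dotp
  rw [Finset.mul_sum]
  refine Finset.sum_congr rfl fun i _ => ?_
  simp; ring

lemma dotp_zero {k : ℕ} (e : Fin k → ℝ) : dotp e 0 = 0 := by simp [dotp]

lemma dotp_le_l2norm {k : ℕ} (e v : Fin k → ℝ) : dotp e v ≤ l2norm e * l2norm v := by
  have h2 := Finset.sum_mul_sq_le_sq_mul_sq Finset.univ e v
  calc dotp e v ≤ |dotp e v| := le_abs_self _
    _ = Real.sqrt ((dotp e v) ^ 2) := (Real.sqrt_sq_eq_abs _).symm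
    _ ≤ Real.sqrt ((∑ i, e i ^ 2) * ∑ i, v i ^ 2) := Real.sqrt_le_sqrt h2
    _ = l2norm e * l2norm v := by
        rw [Real.sqrt_mul (by positivity)]; rfl


def Aset {n p : ℕ} (X : Matrix (Fin n) (Fin p) ℝ) (bs : Fin p → ℝ)
    (h : (Fin p → ℝ) → ℝ≥0∞) (e : Fin n → ℝ) (t : ℝ) : Set ℝ :=
  {x : ℝ | ∃ b : Fin p → ℝ, l2norm (X.mulVec (b - bs)) ≤ t ∧ h b ≠ ⊤ ∧
      x = dotp e (X.mulVec (b - bs)) + (h bs).toReal - (h b).toReal}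

noncomputable def Sval {n p : ℕ} (X : Matrix (Fin n) (Fin p) ℝ) (bs : Fin p → ℝ)
    (h : (Fin p → ℝ) → ℝ≥0∞) (e : Fin n → ℝ) (t : ℝ) : ℝ :=
  sSup (Aset X bs h e t)

section
variable {n p : ℕ} (X : Matrix (Fin n) (Fin p) ℝ) (bs : Fin p → ℝ)
    (h : (Fin p → ℝ) → ℝ≥0∞) (e : Fin n → ℝ)

lemma zero_mem_Aset (hfin : h bs ≠ ⊤) {t : ℝ} (ht : 0 ≤ t) : (0:ℝ) ∈ Aset X bs h e t := by
  refine ⟨bs, ?_, hfin, ?_⟩ <;>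
    simp [sub_self, Matrix.mulVec_zero, l2norm_zero, dotp_zero, ht]

lemma bddAbove_Aset (t : ℝ) : BddAbove (Aset X bs h e t) := by
  refine ⟨l2norm e * t + (h bs).toReal, ?_⟩
  rintro x ⟨b, h1, h2, rfl⟩
  have hcs := dotp_le_l2norm e (X.mulVec (b - bs))
  have hmul : l2norm e * l2norm (X.mulVec (b - bs)) ≤ l2norm e * t :=
    mul_le_mul_of_nonneg_left h1 (l2norm_nonneg e)
  have := ENNReal.toReal_nonneg (a := h b)
  linarith

lemma Sval_nonneg (hfin : h bs ≠ ⊤) {t : ℝ} (ht : 0 ≤ t) : 0 ≤ Sval X bs h e t :=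
  le_csSup (bddAbove_Aset X bs h e t) (zero_mem_Aset X bs h e hfin ht)

lemma Sval_mono (hfin : h bs ≠ ⊤) {s t : ℝ} (hs : 0 ≤ s) (hst : s ≤ t) :
    Sval X bs h e s ≤ Sval X bs h e t :=
  csSup_le_csSup (bddAbove_Aset X bs h e t) ⟨0, zero_mem_Aset X bs h e hfin hs⟩
    (fun x ⟨b, h1, h2, h3⟩ => ⟨b, h1.trans hst, h2, h3⟩)

lemma Sval_scale
    (hconv : ∀ b₁ b₂ : Fin p → ℝ, ∀ a : ℝ, 0 ≤ a → a ≤ 1 →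
      h (a • b₁ + (1 - a) • b₂) ≤ ENNReal.ofReal a * h b₁ + ENNReal.ofReal (1 - a) * h b₂)
    (hfin : h bs ≠ ⊤) {s t : ℝ} (hs : 0 < s) (hst : s ≤ t) :
    Sval X bs h e t ≤ (t / s) * Sval X bs h e s := by
  have ht : 0 < t := hs.trans_le hst
  refine csSup_le ⟨0, zero_mem_Aset X bs h e hfin ht.le⟩ ?_
  rintro x ⟨b, hb1, hb2, rfl⟩
  set a := s / t with ha
  have ha0 : 0 < a := div_pos hs ht
  have ha1 : a ≤ 1 := (div_le_one ht).mpr hst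
  set b' := a • b + (1 - a) • bs with hb'def
  have hdiff : b' - bs = a • (b - bs) := by
    rw [hb'def]; module
  have hcv := hconv b bs a ha0.le ha1
  have hfin1 : ENNReal.ofReal a * h b ≠ ⊤ := ENNReal.mul_ne_top ENNReal.ofReal_ne_top hb2
  have hfin2 : ENNReal.ofReal (1 - a) * h bs ≠ ⊤ := ENNReal.mul_ne_top ENNReal.ofReal_ne_top hfin
  have hRne : ENNReal.ofReal a * h b + ENNReal.ofReal (1 - a) * h bs ≠ ⊤ :=
    ENNReal.add_ne_top.mpr ⟨hfin1, hfin2⟩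
  have hb'fin : h b' ≠ ⊤ := by
    intro hcon; rw [hcon] at hcv; exact hRne (top_le_iff.mp hcv)
  have hb'norm : l2norm (X.mulVec (b' - bs)) ≤ s := by
    rw [hdiff, Matrix.mulVec_smul, l2norm_smul, abs_of_nonneg ha0.le]
    calc a * l2norm (X.mulVec (b - bs)) ≤ a * t :=
          mul_le_mul_of_nonneg_left hb1 ha0.le
      _ = s := by rw [ha]; field_simp
  have htR : (h b').toReal ≤ a * (h b).toReal + (1 - a) * (h bs).toReal := by
    have hmono := ENNReal.toReal_mono hRne hcv
    rwa [ENNReal.toReal_add hfin1 hfin2, ENNReal.toReal_mul, ENNReal.toReal_mul,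
      ENNReal.toReal_ofReal ha0.le, ENNReal.toReal_ofReal (by linarith : (0:ℝ) ≤ 1 - a)]
      at hmono
  have hmem : dotp e (X.mulVec (b' - bs)) + (h bs).toReal - (h b').toReal ∈ Aset X bs h e s :=
    ⟨b', hb'norm, hb'fin, rfl⟩
  have hle := le_csSup (bddAbove_Aset X bs h e s) hmem
  have hax : a * (dotp e (X.mulVec (b - bs)) + (h bs).toReal - (h b).toReal)
      ≤ Sval X bs h e s := by
    refine le_trans ?_ hle
    rw [hdiff, Matrix.mulVec_smul, dotp_smul]
    nlinarith [htR]
  calc dotp e (X.mulVec (b - bs)) + (h bs).toReal - (h b).toReal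
      = (t / s) * (a * (dotp e (X.mulVec (b - bs)) + (h bs).toReal - (h b).toReal)) := by
        rw [ha]; field_simp
    _ ≤ (t / s) * Sval X bs h e s :=
        mul_le_mul_of_nonneg_left hax (by positivity)

lemma Sval_scale'
    (hconv : ∀ b₁ b₂ : Fin p → ℝ, ∀ a : ℝ, 0 ≤ a → a ≤ 1 →
      h (a • b₁ + (1 - a) • b₂) ≤ ENNReal.ofReal a * h b₁ + ENNReal.ofReal (1 - a) * h b₂)
    (hfin : h bs ≠ ⊤) {s t : ℝ} (hs : 0 < s) (hst : s ≤ t) :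
    (s / t) * Sval X bs h e t ≤ Sval X bs h e s := by
  have ht : 0 < t := hs.trans_le hst
  have hsc := Sval_scale X bs h e hconv hfin hs hst
  have := mul_le_mul_of_nonneg_left hsc (le_of_lt (div_pos hs ht))
  calc (s / t) * Sval X bs h e t ≤ (s / t) * ((t / s) * Sval X bs h e s) := this
    _ = Sval X bs h e s := by field_simp

end


/-- `H(t) = (1/t) · sup_{β : ‖X(β-β*)‖ ≤ t} (εᵀX(β-β*) + h(β*) - h(β))`.
Since `h(β*) < ∞`, vectors `β` with `h(β) = ∞` contribute `-∞` and can be discarded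
from the supremum, which is therefore taken over real values. -/
noncomputable def Hval {n p : ℕ} (X : Matrix (Fin n) (Fin p) ℝ) (bs : Fin p → ℝ)
    (h : (Fin p → ℝ) → ℝ≥0∞) (e : Fin n → ℝ) (t : ℝ) : ℝ :=
  sSup {x : ℝ | ∃ b : Fin p → ℝ, l2norm (X.mulVec (b - bs)) ≤ t ∧ h b ≠ ⊤ ∧
      x = dotp e (X.mulVec (b - bs)) + (h bs).toReal - (h b).toReal} / t

lemma Hval_eq {n p : ℕ} (X : Matrix (Fin n) (Fin p) ℝ) (bs : Fin p → ℝ)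
    (h : (Fin p → ℝ) → ℝ≥0∞) (e : Fin n → ℝ) (t : ℝ) :
    Hval X bs h e t = Sval X bs h e t / t := rfl


/-- if the penalty `h` is convex and `h(β*) < ∞`, then `H` is continuous
and non-increasing on `(0, ∞)`. -/
theorem H_continuous_and_nonincreasing {n p : ℕ} (X : Matrix (Fin n) (Fin p) ℝ)
    (bs : Fin p → ℝ) (ε : Fin n → ℝ) (h : (Fin p → ℝ) → ℝ≥0∞)
    (hconv : ∀ b₁ b₂ : Fin p → ℝ, ∀ a : ℝ, 0 ≤ a → a ≤ 1 →
      h (a • b₁ + (1 - a) • b₂) ≤ ENNReal.ofReal a * h b₁ + ENNReal.ofReal (1 - a) * h b₂)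
    (hfin : h bs ≠ ⊤) :
    ContinuousOn (Hval X bs h ε) (Set.Ioi (0 : ℝ)) ∧
    AntitoneOn (Hval X bs h ε) (Set.Ioi (0 : ℝ)) := by
  -- key estimate: |S t - S t0| ≤ (|t - t0| / t0) * S t0
  have key : ∀ t0 t : ℝ, 0 < t0 → 0 < t →
      |Sval X bs h ε t - Sval X bs h ε t0| ≤ (|t - t0| / t0) * Sval X bs h ε t0 := by
    intro t0 t ht0 ht
    rcases le_total t t0 with hle | hle
    · have h1 : Sval X bs h ε t ≤ Sval X bs h ε t0 := Sval_mono X bs h ε hfin ht.le hle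
      have h2 : (t / t0) * Sval X bs h ε t0 ≤ Sval X bs h ε t :=
        Sval_scale' X bs h ε hconv hfin ht hle
      rw [abs_of_nonpos (by linarith), abs_of_nonpos (by linarith)]
      have e1 : (-(t - t0) / t0) * Sval X bs h ε t0
          = Sval X bs h ε t0 - (t / t0) * Sval X bs h ε t0 := by
        field_simp; ring
      linarith
    · have h2 : Sval X bs h ε t ≤ (t / t0) * Sval X bs h ε t0 :=
        Sval_scale X bs h ε hconv hfin ht0 hle
      have h1 : Sval X bs h ε t0 ≤ Sval X bs h ε t := Sval_mono X bs h ε hfin ht0.le hle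
      rw [abs_of_nonneg (by linarith), abs_of_nonneg (by linarith)]
      have e1 : ((t - t0) / t0) * Sval X bs h ε t0
          = (t / t0) * Sval X bs h ε t0 - Sval X bs h ε t0 := by
        field_simp
      linarith
  have hScont : ContinuousOn (Sval X bs h ε) (Set.Ioi (0 : ℝ)) := by
    intro t0 ht0
    rw [Set.mem_Ioi] at ht0
    rw [Metric.continuousWithinAt_iff]
    intro ε' hε'
    have hS0 : 0 ≤ Sval X bs h ε t0 := Sval_nonneg X bs h ε hfin ht0.le
    refine ⟨ε' * t0 / (Sval X bs h ε t0 + 1), by positivity, ?_⟩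
    intro t htmem hdist
    rw [Set.mem_Ioi] at htmem
    rw [Real.dist_eq] at hdist ⊢
    have hk := key t0 t ht0 htmem
    have hstep : (|t - t0| / t0) * Sval X bs h ε t0 < ε' := by
      have h1 : |t - t0| / t0 < ε' / (Sval X bs h ε t0 + 1) := by
        rw [div_lt_div_iff₀ ht0 (by positivity)]
        calc |t - t0| * (Sval X bs h ε t0 + 1)
            < (ε' * t0 / (Sval X bs h ε t0 + 1)) * (Sval X bs h ε t0 + 1) := by
              exact mul_lt_mul_of_pos_right hdist (by positivity)
          _ = ε' * t0 := by field_simp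
      have h3 : (ε' / (Sval X bs h ε t0 + 1)) * Sval X bs h ε t0 < ε' := by
        rw [div_mul_eq_mul_div, div_lt_iff₀ (by positivity)]
        nlinarith
      linarith [mul_le_mul_of_nonneg_right h1.le hS0]
    exact lt_of_le_of_lt hk hstep
  constructor
  · have : ContinuousOn (fun t => Sval X bs h ε t / t) (Set.Ioi (0 : ℝ)) :=
      hScont.div continuousOn_id (fun t ht => ne_of_gt (Set.mem_Ioi.mp ht))
    exact this
  · intro s hs t ht hst
    rw [Set.mem_Ioi] at hs ht
    rw [Hval_eq, Hval_eq]
    have hsc := Sval_scale X bs h ε hconv hfin hs hst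
    calc Sval X bs h ε t / t ≤ ((t / s) * Sval X bs h ε s) / t := by
          gcongr
        _ = Sval X bs h ε s / s := by field_simp
end
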